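/- arXiv:2309.00702 — 12 statements merged into one kernel-verified Lean document; each statement's English description precedes it below -/
import Mathlib

section
/- The optimal value of the Benders primal subproblem equals the closed-form coverage value: the assignment z t j = min(1, Ĩ t j) is BPS-feasible with objective value ∑_{t} ∑_{j ∈ J} min(1, Ĩ t j) * d t j, and every BPS-feasible z satisfies ∑_{t} ∑_{j ∈ J} d t j * z t j ≤ ∑_{t} ∑_{j ∈ J} min(1, Ĩ t j) * d t j. Hence ∑_{t} ∑_{j ∈ J} min(1, Ĩ t j) * d t j is the greatest element of the set of BPS objective values. -/
/-- The optimal value of the Benders primal subproblem equals the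
closed-form coverage value: the assignment `z t j = min 1 (Icand t j)` is
BPS-feasible with objective value `∑ t, ∑ j, min 1 (Icand t j) * d t j`, every
BPS-feasible `z` has objective at most this value, and hence this value is the
greatest element of the set of BPS objective values.  Here `Icand t j` plays the
role of `Ĩ t j`. -/
theorem bps_optimal_value
    (T : ℕ) (hT : 0 < T) (J : Type*) [Fintype J] [Nonempty J]
    (Icand : Fin T → J → ℝ) (d : Fin T → J → ℝ)
    (hI : ∀ t j, 0 ≤ Icand t j) (hd : ∀ t j, 0 < d t j) :
    ((∀ t j, 0 ≤ min 1 (Icand t j) ∧ min 1 (Icand t j) ≤ 1 ∧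
        min 1 (Icand t j) ≤ Icand t j) ∧
      (∑ t, ∑ j, d t j * min 1 (Icand t j)) = ∑ t, ∑ j, min 1 (Icand t j) * d t j ∧
      (∀ z : Fin T → J → ℝ,
        (∀ t j, 0 ≤ z t j ∧ z t j ≤ 1 ∧ z t j ≤ Icand t j) →
        ∑ t, ∑ j, d t j * z t j ≤ ∑ t, ∑ j, min 1 (Icand t j) * d t j)) ∧
    IsGreatest
      { v : ℝ | ∃ z : Fin T → J → ℝ,
          (∀ t j, 0 ≤ z t j ∧ z t j ≤ 1 ∧ z t j ≤ Icand t j) ∧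
          v = ∑ t, ∑ j, d t j * z t j }
      (∑ t, ∑ j, min 1 (Icand t j) * d t j) := by
  have key : ∀ z : Fin T → J → ℝ,
      (∀ t j, 0 ≤ z t j ∧ z t j ≤ 1 ∧ z t j ≤ Icand t j) →
      ∑ t, ∑ j, d t j * z t j ≤ ∑ t, ∑ j, min 1 (Icand t j) * d t j := by
    intro z hz
    apply Finset.sum_le_sum; intro t _
    apply Finset.sum_le_sum; intro j _
    rw [mul_comm (min 1 (Icand t j))]
    exact mul_le_mul_of_nonneg_left (le_min (hz t j).2.1 (hz t j).2.2) (hd t j).le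
  have heq : (∑ t, ∑ j, d t j * min 1 (Icand t j)) = ∑ t, ∑ j, min 1 (Icand t j) * d t j := by
    simp [mul_comm]
  refine ⟨⟨fun t j => ⟨le_min zero_le_one (hI t j), min_le_left _ _, min_le_right _ _⟩,
    heq, key⟩, ⟨fun t j => min 1 (Icand t j),
      fun t j => ⟨le_min zero_le_one (hI t j), min_le_left _ _, min_le_right _ _⟩, heq.symm⟩,
    ?_⟩
  rintro v ⟨z, hz, rfl⟩
  exact key z hz
end

section
/- The Benders dual subproblem can be solved by inspection: the pair defined by π t j = d t j if Ĩ t j < 1 and π t j = 0 otherwise, and σ t j = d t j if Ĩ t j ≥ 1 and σ t j = 0 otherwise, is BDS-feasible with objective value ∑_{t} ∑_{j ∈ J} min(1, Ĩ t j) * d t j, and every BDS-feasible pair (π, σ) satisfies ∑_{t} ∑_{j ∈ J} (Ĩ t j * π t j + σ t j) ≥ ∑_{t} ∑_{j ∈ J} min(1, Ĩ t j) * d t j. Hence ∑_{t} ∑_{j ∈ J} min(1, Ĩ t j) * d t j is the least element of the set of BDS objective values. -/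
/-- The Benders dual subproblem is solved by inspection: the pair
given by `π t j = d t j` if `Icand t j < 1` (else `0`) and `σ t j = d t j` if
`Icand t j ≥ 1` (else `0`) is BDS-feasible with objective value
`∑ t, ∑ j, min 1 (Icand t j) * d t j`, every BDS-feasible pair has objective at
least this value, and hence this value is the least element of the set of BDS
objective values.  Here `Icand t j` plays the role of `Ĩ t j`. -/
theorem bds_solved_by_inspection
    (T : ℕ) (hT : 0 < T) (J : Type*) [Fintype J] [Nonempty J]
    (Icand : Fin T → J → ℝ) (d : Fin T → J → ℝ)
    (hI : ∀ t j, 0 ≤ Icand t j) (hd : ∀ t j, 0 < d t j) :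
    ((∀ t j, 0 ≤ (if Icand t j < 1 then d t j else 0) ∧
        0 ≤ (if 1 ≤ Icand t j then d t j else 0) ∧
        d t j ≤ (if Icand t j < 1 then d t j else 0) +
          (if 1 ≤ Icand t j then d t j else 0)) ∧
      (∑ t, ∑ j, (Icand t j * (if Icand t j < 1 then d t j else 0) +
          (if 1 ≤ Icand t j then d t j else 0)))
        = ∑ t, ∑ j, min 1 (Icand t j) * d t j ∧
      (∀ π σ : Fin T → J → ℝ,
        (∀ t j, 0 ≤ π t j ∧ 0 ≤ σ t j ∧ d t j ≤ π t j + σ t j) →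
        ∑ t, ∑ j, min 1 (Icand t j) * d t j
          ≤ ∑ t, ∑ j, (Icand t j * π t j + σ t j))) ∧
    IsLeast
      { v : ℝ | ∃ π σ : Fin T → J → ℝ,
          (∀ t j, 0 ≤ π t j ∧ 0 ≤ σ t j ∧ d t j ≤ π t j + σ t j) ∧
          v = ∑ t, ∑ j, (Icand t j * π t j + σ t j) }
      (∑ t, ∑ j, min 1 (Icand t j) * d t j) := by
  have hfeas : ∀ t j, 0 ≤ (if Icand t j < 1 then d t j else 0) ∧
      0 ≤ (if 1 ≤ Icand t j then d t j else 0) ∧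
      d t j ≤ (if Icand t j < 1 then d t j else 0) +
        (if 1 ≤ Icand t j then d t j else 0) := by
    intro t j
    rcases lt_or_ge (Icand t j) 1 with h | h
    · simp [h, not_le.mpr h, (hd t j).le]
    · simp [h, not_lt.mpr h, (hd t j).le]
  have hval : (∑ t, ∑ j, (Icand t j * (if Icand t j < 1 then d t j else 0) +
        (if 1 ≤ Icand t j then d t j else 0)))
      = ∑ t, ∑ j, min 1 (Icand t j) * d t j := by
    refine Finset.sum_congr rfl fun t _ => Finset.sum_congr rfl fun j _ => ?_
    rcases lt_or_ge (Icand t j) 1 with h | h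
    · simp [h, not_le.mpr h, min_eq_right h.le]
    · simp [h, not_lt.mpr h, min_eq_left h]
  have hlb : ∀ π σ : Fin T → J → ℝ,
      (∀ t j, 0 ≤ π t j ∧ 0 ≤ σ t j ∧ d t j ≤ π t j + σ t j) →
      ∑ t, ∑ j, min 1 (Icand t j) * d t j
        ≤ ∑ t, ∑ j, (Icand t j * π t j + σ t j) := by
    intro π σ hfs
    refine Finset.sum_le_sum fun t _ => Finset.sum_le_sum fun j _ => ?_
    obtain ⟨hπ, hσ, hds⟩ := hfs t j
    rcases le_or_gt 1 (Icand t j) with h | h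
    · rw [min_eq_left h, one_mul]
      calc d t j ≤ π t j + σ t j := hds
        _ ≤ Icand t j * π t j + σ t j := by nlinarith
    · rw [min_eq_right h.le]
      calc Icand t j * d t j ≤ Icand t j * (π t j + σ t j) :=
            mul_le_mul_of_nonneg_left hds (hI t j)
        _ ≤ Icand t j * π t j + σ t j := by nlinarith
  refine ⟨⟨hfeas, hval, hlb⟩, ⟨_, _, hfeas, hval.symm⟩, ?_⟩
  rintro v ⟨π, σ, hfs, rfl⟩
  exact hlb π σ hfs
end

section
/- Pointwise characterization of optimal Benders dual solutions: a BDS-feasible pair (π, σ) attains the optimal value, i.e. ∑_{t} ∑_{j ∈ J} (Ĩ t j * π t j + σ t j) = ∑_{t} ∑_{j ∈ J} min(1, Ĩ t j) * d t j, if and only if for every t and j the following hold: if Ĩ t j = 0 then σ t j = 0; if 0 < Ĩ t j < 1 then π t j = d t j and σ t j = 0; if Ĩ t j = 1 then π t j + σ t j = d t j; and if Ĩ t j > 1 then π t j = 0 and σ t j = d t j. -/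
lemma pt_le (a p s dd : ℝ) (ha : 0 ≤ a) (hp : 0 ≤ p) (hs : 0 ≤ s)
    (hsum : dd ≤ p + s) (hdd : 0 < dd) :
    min 1 a * dd ≤ a * p + s := by
  rcases le_or_gt a 1 with h | h
  · rw [min_eq_right h]
    have h1 : a * dd ≤ a * (p + s) := by nlinarith
    nlinarith
  · rw [min_eq_left h.le]
    nlinarith

lemma pt_eq (a p s dd : ℝ) (ha : 0 ≤ a) (hp : 0 ≤ p) (hs : 0 ≤ s)
    (hsum : dd ≤ p + s) (hdd : 0 < dd) :
    a * p + s = min 1 a * dd ↔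
      ((a = 0 → s = 0) ∧ (0 < a → a < 1 → p = dd ∧ s = 0) ∧
       (a = 1 → p + s = dd) ∧ (1 < a → p = 0 ∧ s = dd)) := by
  constructor
  · intro h
    rcases lt_trichotomy a 1 with hl | he | hg
    · rw [min_eq_right hl.le] at h
      rcases eq_or_lt_of_le ha with h0 | h0
      · refine ⟨fun _ => ?_, fun hp => absurd hp (by linarith), fun h1 => by linarith, fun h1 => by linarith⟩
        nlinarith
      · have hs0 : s = 0 := by nlinarith
        have hpd : p = dd := by
          have := h
          rw [hs0] at this
          have : a * p = a * dd := by linarith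
          exact mul_left_cancel₀ (ne_of_gt h0) this
        exact ⟨fun h0' => hs0, fun _ _ => ⟨hpd, hs0⟩, fun h1 => by linarith, fun h1 => by linarith⟩
    · subst he
      rw [min_self] at h
      refine ⟨fun h0 => by linarith, fun h0 h1 => by linarith, fun _ => by linarith, fun h1 => by linarith⟩
    · rw [min_eq_left hg.le] at h
      have hp0 : p = 0 := by nlinarith
      have hsd : s = dd := by nlinarith
      exact ⟨fun h0 => by linarith, fun h0 h1 => by linarith, fun h1 => by linarith,
        fun _ => ⟨hp0, hsd⟩⟩
  · rintro ⟨h0, h01, h1, hg⟩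
    rcases lt_trichotomy a 1 with hl | he | hgt
    · rw [min_eq_right hl.le]
      rcases eq_or_lt_of_le ha with hz | hz
      · rw [← hz, h0 hz.symm]; ring
      · obtain ⟨hpd, hs0⟩ := h01 hz hl
        rw [hpd, hs0]; ring
    · subst he; rw [min_self, one_mul, one_mul, h1 rfl]
    · rw [min_eq_left hgt.le, one_mul]
      obtain ⟨hp0, hsd⟩ := hg hgt
      rw [hp0, hsd]; ring

/-- Pointwise characterization of optimal Benders dual solutions: a
BDS-feasible pair `(π, σ)` attains the optimal value
`∑ t, ∑ j, min 1 (Icand t j) * d t j` if and only if for every `t` and `j`: if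
`Icand t j = 0` then `σ t j = 0`; if `0 < Icand t j < 1` then `π t j = d t j` and
`σ t j = 0`; if `Icand t j = 1` then `π t j + σ t j = d t j`; and if
`Icand t j > 1` then `π t j = 0` and `σ t j = d t j`.  Here `Icand t j` plays the
role of `Ĩ t j`. -/
theorem bds_optimal_iff_pointwise
    (T : ℕ) (hT : 0 < T) (J : Type*) [Fintype J] [Nonempty J]
    (Icand : Fin T → J → ℝ) (d : Fin T → J → ℝ)
    (hI : ∀ t j, 0 ≤ Icand t j) (hd : ∀ t j, 0 < d t j)
    (π σ : Fin T → J → ℝ)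
    (hfeas : ∀ t j, 0 ≤ π t j ∧ 0 ≤ σ t j ∧ d t j ≤ π t j + σ t j) :
    (∑ t, ∑ j, (Icand t j * π t j + σ t j) = ∑ t, ∑ j, min 1 (Icand t j) * d t j)
      ↔ (∀ t j,
          (Icand t j = 0 → σ t j = 0) ∧
          (0 < Icand t j → Icand t j < 1 → π t j = d t j ∧ σ t j = 0) ∧
          (Icand t j = 1 → π t j + σ t j = d t j) ∧
          (1 < Icand t j → π t j = 0 ∧ σ t j = d t j)) := by
  have hle : ∀ t j, min 1 (Icand t j) * d t j ≤ Icand t j * π t j + σ t j := fun t j =>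
    pt_le _ _ _ _ (hI t j) (hfeas t j).1 (hfeas t j).2.1 (hfeas t j).2.2 (hd t j)
  rw [← Finset.sum_product', ← Finset.sum_product']
  rw [eq_comm, Finset.sum_eq_sum_iff_of_le (fun p _ => hle p.1 p.2)]
  constructor
  · intro h t j
    have := (h (t, j) (Finset.mem_univ _)).symm
    exact (pt_eq _ _ _ _ (hI t j) (hfeas t j).1 (hfeas t j).2.1 (hfeas t j).2.2 (hd t j)).mp this
  · intro h p _
    exact ((pt_eq _ _ _ _ (hI p.1 p.2) (hfeas p.1 p.2).1 (hfeas p.1 p.2).2.1 (hfeas p.1 p.2).2.2 (hd p.1 p.2)).mpr (h p.1 p.2)).symm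
end

section
/- Validity of the Benders optimality cuts (Proposition 1, validity part): for every family of sets Γ : Fin T → Set J and every x : Fin T → I → ℝ with 0 ≤ x t i ≤ 1 for all t, i, the cut left-hand side dominates the covered demand: L_Γ(x) = ∑_{t} ( ∑_{j ∈ Γ t} Icov t j x * d t j + ∑_{j ∉ Γ t} d t j ) ≥ f(x). In particular the Benders optimality cut generated at any (integer or fractional) candidate solution x̃ with Γ given by (B0), (B1) or (B2) is valid for every x with entries in [0,1]. -/
open scoped Classical

/-- Validity of the Benders optimality cuts (Proposition 1, validity
part): for every family of sets `Γ : Fin T → Set J` and every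
`x : Fin T → I → ℝ` with entries in `[0,1]`, the cut left-hand side
`L_Γ(x) = ∑ t, (∑_{j ∈ Γ t} Icov t j x * d t j + ∑_{j ∉ Γ t} d t j)` dominates
the total covered demand `f(x) = ∑ t, ∑ j, min 1 (Icov t j x) * d t j`, where
`Icov t j x = ∑ i, a t i j * x t i`. -/
theorem benders_cut_validity
    (T : ℕ) (hT : 0 < T) (I J : Type*)
    [Fintype I] [Nonempty I] [Fintype J] [Nonempty J]
    (a : Fin T → I → J → ℝ) (d : Fin T → J → ℝ)
    (ha : ∀ t i j, a t i j = 0 ∨ a t i j = 1) (hd : ∀ t j, 0 < d t j)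
    (Γ : Fin T → Set J) (x : Fin T → I → ℝ)
    (hx : ∀ t i, 0 ≤ x t i ∧ x t i ≤ 1) :
    ∑ t, ((∑ j ∈ Finset.univ.filter (fun j => j ∈ Γ t),
            (∑ i, a t i j * x t i) * d t j)
        + ∑ j ∈ Finset.univ.filter (fun j => j ∉ Γ t), d t j)
      ≥ ∑ t, ∑ j, min 1 (∑ i, a t i j * x t i) * d t j := by
  apply Finset.sum_le_sum
  intro t _
  rw [← Finset.sum_filter_add_sum_filter_not Finset.univ (fun j => j ∈ Γ t)]
  apply add_le_add <;> apply Finset.sum_le_sum <;> intro j hj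
  · exact mul_le_mul_of_nonneg_right (min_le_right _ _) (hd t j).le
  · calc min 1 (∑ i, a t i j * x t i) * d t j ≤ 1 * d t j :=
        mul_le_mul_of_nonneg_right (min_le_left _ _) (hd t j).le
      _ = d t j := one_mul _
end

section
/- Tightness of the B0 and B2 Benders optimality cuts (Proposition 1, tightness part): let x̃ : Fin T → I → ℝ satisfy 0 ≤ x̃ t i ≤ 1 for all t, i. If Γ t = { j : Icov t j x̃ < 1 } (the B0 set) or Γ t = { j : Icov t j x̃ ≤ 1 } (the B2 set) for every t, then the cut left-hand side evaluated at the generating solution equals its covered demand: L_Γ(x̃) = ∑_{t} ( ∑_{j ∈ Γ t} Icov t j x̃ * d t j + ∑_{j ∉ Γ t} d t j ) = f(x̃). -/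
open scoped Classical

/-- Tightness of the B0 and B2 Benders optimality cuts (Proposition
1, tightness part): if `xt` (playing the role of `x̃`) has entries in `[0,1]` and
`Γ t` is the B0 set `{j | Icov t j xt < 1}` for every `t`, or the B2 set
`{j | Icov t j xt ≤ 1}` for every `t`, then the cut left-hand side evaluated at
the generating solution equals its covered demand: `L_Γ(xt) = f(xt)`. -/
theorem benders_cut_tightness_B0_B2
    (T : ℕ) (hT : 0 < T) (I J : Type*)
    [Fintype I] [Nonempty I] [Fintype J] [Nonempty J]
    (a : Fin T → I → J → ℝ) (d : Fin T → J → ℝ)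
    (ha : ∀ t i j, a t i j = 0 ∨ a t i j = 1) (hd : ∀ t j, 0 < d t j)
    (xt : Fin T → I → ℝ) (hxt : ∀ t i, 0 ≤ xt t i ∧ xt t i ≤ 1)
    (Γ : Fin T → Set J)
    (hΓ : (∀ t, Γ t = { j : J | ∑ i, a t i j * xt t i < 1 }) ∨
          (∀ t, Γ t = { j : J | ∑ i, a t i j * xt t i ≤ 1 })) :
    ∑ t, ((∑ j ∈ Finset.univ.filter (fun j => j ∈ Γ t),
            (∑ i, a t i j * xt t i) * d t j)
        + ∑ j ∈ Finset.univ.filter (fun j => j ∉ Γ t), d t j)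
      = ∑ t, ∑ j, min 1 (∑ i, a t i j * xt t i) * d t j := by
  refine Finset.sum_congr rfl fun t _ => ?_
  have key : ∀ j, (if j ∈ Γ t then (∑ i, a t i j * xt t i) * d t j else d t j)
      = min 1 (∑ i, a t i j * xt t i) * d t j := by
    intro j
    by_cases h : j ∈ Γ t
    · have hle : ∑ i, a t i j * xt t i ≤ 1 := by
        rcases hΓ with hΓ | hΓ <;> rw [hΓ] at h <;> simp only [Set.mem_setOf_eq] at h
        · exact le_of_lt h
        · exact h
      simp [h, min_eq_right hle]
    · have hge : 1 ≤ ∑ i, a t i j * xt t i := by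
        rcases hΓ with hΓ | hΓ <;> rw [hΓ] at h <;> simp only [Set.mem_setOf_eq] at h <;>
          [exact not_lt.mp h; exact le_of_lt (not_le.mp h)]
      simp [h, min_eq_left hge]
  calc (∑ j ∈ Finset.univ.filter (fun j => j ∈ Γ t), (∑ i, a t i j * xt t i) * d t j)
        + ∑ j ∈ Finset.univ.filter (fun j => j ∉ Γ t), d t j
      = ∑ j, (if j ∈ Γ t then (∑ i, a t i j * xt t i) * d t j else d t j) := by
        rw [Finset.sum_ite]
        try rfl
    _ = ∑ j, min 1 (∑ i, a t i j * xt t i) * d t j := Finset.sum_congr rfl fun j _ => key j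
end

section
/- Tightness of the B1 Benders optimality cut (Proposition 1, tightness part): let x̃ : Fin T → I → ℝ satisfy 0 ≤ x̃ t i ≤ 1 for all t, i, and let Γ t = { j ∉ J_s : Icov t j x̃ < 1 } ∪ { j ∈ J_s : Icov t j x̃ ≤ 1 } (the B1 set) for every t. Then the cut left-hand side evaluated at the generating solution equals its covered demand: L_Γ(x̃) = ∑_{t} ( ∑_{j ∈ Γ t} Icov t j x̃ * d t j + ∑_{j ∉ Γ t} d t j ) = f(x̃). -/
open scoped Classical

/-- Tightness of the B1 Benders optimality cut (Proposition 1,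
tightness part): if `xt` (playing the role of `x̃`) has entries in `[0,1]`,
`Js = {j | ∑ t, ∑ i, a t i j = 1}` is the set of users covered by exactly one
facility-period pair, and `Γ t` is the B1 set
`{j ∉ Js | Icov t j xt < 1} ∪ {j ∈ Js | Icov t j xt ≤ 1}` for every `t`, then
the cut left-hand side evaluated at the generating solution equals its covered
demand: `L_Γ(xt) = f(xt)`. -/
theorem benders_cut_tightness_B1
    (T : ℕ) (hT : 0 < T) (I J : Type*)
    [Fintype I] [Nonempty I] [Fintype J] [Nonempty J]
    (a : Fin T → I → J → ℝ) (d : Fin T → J → ℝ)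
    (ha : ∀ t i j, a t i j = 0 ∨ a t i j = 1) (hd : ∀ t j, 0 < d t j)
    (xt : Fin T → I → ℝ) (hxt : ∀ t i, 0 ≤ xt t i ∧ xt t i ≤ 1)
    (Js : Set J) (hJs : Js = { j : J | ∑ t, ∑ i, a t i j = 1 })
    (Γ : Fin T → Set J)
    (hΓ : ∀ t, Γ t = { j : J | j ∉ Js ∧ ∑ i, a t i j * xt t i < 1 }
                    ∪ { j : J | j ∈ Js ∧ ∑ i, a t i j * xt t i ≤ 1 }) :
    ∑ t, ((∑ j ∈ Finset.univ.filter (fun j => j ∈ Γ t),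
            (∑ i, a t i j * xt t i) * d t j)
        + ∑ j ∈ Finset.univ.filter (fun j => j ∉ Γ t), d t j)
      = ∑ t, ∑ j, min 1 (∑ i, a t i j * xt t i) * d t j := by
  refine Finset.sum_congr rfl fun t _ => ?_
  rw [← Finset.sum_filter_add_sum_filter_not Finset.univ (fun j => j ∈ Γ t)
      (fun j => min 1 (∑ i, a t i j * xt t i) * d t j)]
  congr 1
  · refine Finset.sum_congr rfl fun j hj => ?_
    simp only [Finset.mem_filter, hΓ t, Set.mem_union, Set.mem_setOf_eq] at hj
    have hle : (∑ i, a t i j * xt t i) ≤ 1 := by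
      rcases hj.2 with ⟨_, h⟩ | ⟨_, h⟩
      · exact le_of_lt h
      · exact h
    rw [min_eq_right hle]
  · refine Finset.sum_congr rfl fun j hj => ?_
    simp only [Finset.mem_filter, hΓ t, Set.mem_union, Set.mem_setOf_eq,
      not_or, not_and_or, not_not, not_lt, not_le] at hj
    have hge : (1 : ℝ) ≤ ∑ i, a t i j * xt t i := by
      rcases hj.2 with ⟨h1, h2⟩
      by_cases hjs : j ∈ Js
      · rcases h2 with h | h
        · exact absurd hjs h
        · exact le_of_lt h
      · rcases h1 with h | h
        · exact absurd h hjs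
        · exact h
    rw [min_eq_left hge, one_mul]
end

section
/- The B1 cuts dominate the B0 cuts: for any candidate solution x̃ : Fin T → I → ℝ, let Γ_B0 t = { j : Icov t j x̃ < 1 } and Γ_B1 t = { j ∉ J_s : Icov t j x̃ < 1 } ∪ { j ∈ J_s : Icov t j x̃ ≤ 1 }. Then for every x : Fin T → I → ℝ with 0 ≤ x t i ≤ 1 for all t, i, the B1 cut left-hand side is at most the B0 cut left-hand side: L_{Γ_B1}(x) ≤ L_{Γ_B0}(x). -/
open scoped Classical

/-- The B1 cuts dominate the B0 cuts: for any candidate solution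
`xt` (playing the role of `x̃`), letting `ΓB0 t = {j | Icov t j xt < 1}` and
`ΓB1 t = {j ∉ Js | Icov t j xt < 1} ∪ {j ∈ Js | Icov t j xt ≤ 1}` with
`Js = {j | ∑ t, ∑ i, a t i j = 1}`, for every `x` with entries in `[0,1]` the B1
cut left-hand side is at most the B0 cut left-hand side:
`L_{ΓB1}(x) ≤ L_{ΓB0}(x)`. -/
theorem benders_cut_B1_dominates_B0
    (T : ℕ) (hT : 0 < T) (I J : Type*)
    [Fintype I] [Nonempty I] [Fintype J] [Nonempty J]
    (a : Fin T → I → J → ℝ) (d : Fin T → J → ℝ)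
    (ha : ∀ t i j, a t i j = 0 ∨ a t i j = 1) (hd : ∀ t j, 0 < d t j)
    (xt : Fin T → I → ℝ)
    (Js : Set J) (hJs : Js = { j : J | ∑ t, ∑ i, a t i j = 1 })
    (ΓB0 ΓB1 : Fin T → Set J)
    (hΓB0 : ∀ t, ΓB0 t = { j : J | ∑ i, a t i j * xt t i < 1 })
    (hΓB1 : ∀ t, ΓB1 t = { j : J | j ∉ Js ∧ ∑ i, a t i j * xt t i < 1 }
                        ∪ { j : J | j ∈ Js ∧ ∑ i, a t i j * xt t i ≤ 1 })
    (x : Fin T → I → ℝ) (hx : ∀ t i, 0 ≤ x t i ∧ x t i ≤ 1) :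
    ∑ t, ((∑ j ∈ Finset.univ.filter (fun j => j ∈ ΓB1 t),
            (∑ i, a t i j * x t i) * d t j)
        + ∑ j ∈ Finset.univ.filter (fun j => j ∉ ΓB1 t), d t j)
      ≤ ∑ t, ((∑ j ∈ Finset.univ.filter (fun j => j ∈ ΓB0 t),
            (∑ i, a t i j * x t i) * d t j)
        + ∑ j ∈ Finset.univ.filter (fun j => j ∉ ΓB0 t), d t j) := by
  classical
  apply Finset.sum_le_sum
  intro t _
  rw [Finset.sum_filter, Finset.sum_filter, Finset.sum_filter, Finset.sum_filter,
    ← Finset.sum_add_distrib, ← Finset.sum_add_distrib]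
  apply Finset.sum_le_sum
  intro j _
  by_cases h0 : j ∈ ΓB0 t
  · have h1 : j ∈ ΓB1 t := by
      rw [hΓB1]
      rw [hΓB0] at h0
      by_cases hjs : j ∈ Js
      · exact Or.inr ⟨hjs, le_of_lt h0⟩
      · exact Or.inl ⟨hjs, h0⟩
    simp [h0, h1]
  · by_cases h1 : j ∈ ΓB1 t
    · simp only [h0, h1, if_true, if_false, not_true, not_false_iff, add_zero, zero_add]
      have hjs : j ∈ Js ∧ ∑ i, a t i j * xt t i ≤ 1 := by
        rw [hΓB1] at h1
        rw [hΓB0] at h0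
        rcases h1 with h | h
        · exact absurd h.2 h0
        · exact h
      have hsum1 : ∑ t', ∑ i, a t' i j = 1 := by
        have := hjs.1
        rw [hJs] at this
        exact this
      have hanneg : ∀ t' i, 0 ≤ a t' i j := by
        intro t' i
        rcases ha t' i j with h | h <;> simp [h]
      have hle : ∑ i, a t i j ≤ 1 := by
        calc ∑ i, a t i j ≤ ∑ t', ∑ i, a t' i j :=
              Finset.single_le_sum (fun t' _ => Finset.sum_nonneg fun i _ => hanneg t' i)
                (Finset.mem_univ t)
          _ = 1 := hsum1
      have hIcov : ∑ i, a t i j * x t i ≤ 1 := by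
        calc ∑ i, a t i j * x t i ≤ ∑ i, a t i j := by
              apply Finset.sum_le_sum
              intro i _
              calc a t i j * x t i ≤ a t i j * 1 :=
                    mul_le_mul_of_nonneg_left (hx t i).2 (hanneg t i)
                _ = a t i j := mul_one _
          _ ≤ 1 := hle
      exact mul_le_of_le_one_left (hd t j).le hIcov
    · simp [h0, h1]
end

section
/- Closed-form Pareto-optimal cuts (Proposition 3): suppose the pair (π^c, σ^c) satisfies, for every t and j: if Ĩ t j < 1 then π^c t j = d t j and σ^c t j = 0; if Ĩ t j > 1 then π^c t j = 0 and σ^c t j = d t j; if Ĩ t j = 1 and Î t j < 1 then π^c t j = d t j and σ^c t j = 0; if Ĩ t j = 1 and Î t j > 1 then π^c t j = 0 and σ^c t j = d t j; and if Ĩ t j = 1 and Î t j = 1 then π^c t j ≥ 0, σ^c t j ≥ 0 and π^c t j + σ^c t j = d t j. Then (π^c, σ^c) is MW-feasible, and for every MW-feasible pair (π, σ) one has ∑_{t} ∑_{j ∈ J} (Î t j * π^c t j + σ^c t j) ≤ ∑_{t} ∑_{j ∈ J} (Î t j * π t j + σ t j); that is, (π^c, σ^c) solves the Magnanti–Wong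 subproblem. -/
lemma sum2_eq_of_le {T : ℕ} {J : Type*} [Fintype J] (f g : Fin T → J → ℝ)
    (hle : ∀ t j, f t j ≤ g t j)
    (heq : ∑ t, ∑ j, f t j = ∑ t, ∑ j, g t j) : ∀ t j, f t j = g t j := by
  have h1 : ∀ t : Fin T, ∑ j, f t j = ∑ j, g t j := by
    have := (Finset.sum_eq_sum_iff_of_le
      (fun t (_ : t ∈ Finset.univ) => Finset.sum_le_sum fun j _ => hle t j)).mp heq
    exact fun t => this t (Finset.mem_univ t)
  intro t j
  exact (Finset.sum_eq_sum_iff_of_le (fun j _ => hle t j)).mp (h1 t) j (Finset.mem_univ j)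

/-- Closed-form Pareto-optimal cuts (Proposition 3): `Icand` plays
the role of `Ĩ` (coverage of the candidate solution) and `Icore` the role of `Î`
(coverage of the core point).  If the pair `(πc, σc)` satisfies the pointwise
closed-form conditions, then `(πc, σc)` is MW-feasible and minimizes the
Magnanti–Wong objective `∑ t, ∑ j, (Icore t j * π t j + σ t j)` over all
MW-feasible pairs, where MW-feasibility means BDS-feasibility together with
attaining the optimal BDS value `∑ t, ∑ j, min 1 (Icand t j) * d t j`. -/
theorem pareto_optimal_cut_closed_form
    (T : ℕ) (hT : 0 < T) (J : Type*) [Fintype J] [Nonempty J]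
    (Icand Icore : Fin T → J → ℝ) (d : Fin T → J → ℝ)
    (hIcand : ∀ t j, 0 ≤ Icand t j) (hIcore : ∀ t j, 0 ≤ Icore t j)
    (hd : ∀ t j, 0 < d t j)
    (πc σc : Fin T → J → ℝ)
    (h1 : ∀ t j, Icand t j < 1 → πc t j = d t j ∧ σc t j = 0)
    (h2 : ∀ t j, 1 < Icand t j → πc t j = 0 ∧ σc t j = d t j)
    (h3 : ∀ t j, Icand t j = 1 → Icore t j < 1 → πc t j = d t j ∧ σc t j = 0)
    (h4 : ∀ t j, Icand t j = 1 → 1 < Icore t j → πc t j = 0 ∧ σc t j = d t j)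
    (h5 : ∀ t j, Icand t j = 1 → Icore t j = 1 →
        0 ≤ πc t j ∧ 0 ≤ σc t j ∧ πc t j + σc t j = d t j) :
    ((∀ t j, 0 ≤ πc t j ∧ 0 ≤ σc t j ∧ d t j ≤ πc t j + σc t j) ∧
      ∑ t, ∑ j, (Icand t j * πc t j + σc t j)
        = ∑ t, ∑ j, min 1 (Icand t j) * d t j) ∧
    (∀ π σ : Fin T → J → ℝ,
      (∀ t j, 0 ≤ π t j ∧ 0 ≤ σ t j ∧ d t j ≤ π t j + σ t j) →
      ∑ t, ∑ j, (Icand t j * π t j + σ t j)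
        = ∑ t, ∑ j, min 1 (Icand t j) * d t j →
      ∑ t, ∑ j, (Icore t j * πc t j + σc t j)
        ≤ ∑ t, ∑ j, (Icore t j * π t j + σ t j)) := by
  -- pointwise sum of πc and σc equals d when Icand = 1
  have hsum1 : ∀ t j, Icand t j = 1 → πc t j + σc t j = d t j := by
    intro t j h
    rcases lt_trichotomy (Icore t j) 1 with hc | hc | hc
    · obtain ⟨hp, hs⟩ := h3 t j h hc; rw [hp, hs]; ring
    · exact (h5 t j h hc).2.2
    · obtain ⟨hp, hs⟩ := h4 t j h hc; rw [hp, hs]; ring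
  have feas : ∀ t j, 0 ≤ πc t j ∧ 0 ≤ σc t j ∧ d t j ≤ πc t j + σc t j := by
    intro t j
    rcases lt_trichotomy (Icand t j) 1 with h | h | h
    · obtain ⟨hp, hs⟩ := h1 t j h
      exact ⟨hp ▸ (hd t j).le, hs.ge, by rw [hp, hs]; linarith [hd t j]⟩
    · have hpq := hsum1 t j h
      rcases lt_trichotomy (Icore t j) 1 with hc | hc | hc
      · obtain ⟨hp, hs⟩ := h3 t j h hc
        exact ⟨hp ▸ (hd t j).le, hs.ge, hpq.ge⟩
      · obtain ⟨a, b, c⟩ := h5 t j h hc; exact ⟨a, b, c.ge⟩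
      · obtain ⟨hp, hs⟩ := h4 t j h hc
        exact ⟨hp.ge, hs ▸ (hd t j).le, hpq.ge⟩
    · obtain ⟨hp, hs⟩ := h2 t j h
      exact ⟨hp.ge, hs ▸ (hd t j).le, by rw [hp, hs]; linarith [hd t j]⟩
  have hval : ∀ t j, Icand t j * πc t j + σc t j = min 1 (Icand t j) * d t j := by
    intro t j
    rcases lt_trichotomy (Icand t j) 1 with h | h | h
    · obtain ⟨hp, hs⟩ := h1 t j h
      rw [hp, hs, min_eq_right h.le]; ring
    · rw [h, min_self, one_mul, one_mul]; exact hsum1 t j h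
    · obtain ⟨hp, hs⟩ := h2 t j h
      rw [hp, hs, min_eq_left h.le]; ring
  refine ⟨⟨feas, Finset.sum_congr rfl fun t _ => Finset.sum_congr rfl fun j _ => hval t j⟩,
    ?_⟩
  intro π σ hfeas heq
  -- pointwise lower bound on the objective value
  have hle : ∀ t j, min 1 (Icand t j) * d t j ≤ Icand t j * π t j + σ t j := by
    intro t j
    obtain ⟨hπ, hσ, hpq⟩ := hfeas t j
    rcases le_or_gt 1 (Icand t j) with h | h
    · rw [min_eq_left h, one_mul]
      nlinarith [mul_le_mul_of_nonneg_right (le_refl (Icand t j)) hπ]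
    · rw [min_eq_right h.le]
      nlinarith [mul_nonneg (hIcand t j) (by linarith : 0 ≤ π t j + σ t j - d t j),
        mul_nonneg (sub_nonneg.mpr h.le) hσ]
  have key : ∀ t j, min 1 (Icand t j) * d t j = Icand t j * π t j + σ t j :=
    sum2_eq_of_le _ _ hle (heq.symm)
  refine Finset.sum_le_sum fun t _ => Finset.sum_le_sum fun j _ => ?_
  obtain ⟨hπ, hσ, hpq⟩ := hfeas t j
  have hk := key t j
  have hIc := hIcore t j
  have hdp := hd t j
  rcases lt_trichotomy (Icand t j) 1 with h | h | h
  · -- min = Icand, forces π ≥ d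
    rw [min_eq_right h.le] at hk
    obtain ⟨hp, hs⟩ := h1 t j h
    rw [hp, hs]
    have hπd : d t j ≤ π t j := by nlinarith
    nlinarith [mul_le_mul_of_nonneg_left hπd hIc]
  · -- Icand = 1 : π + σ = d
    rw [h, min_self, one_mul, one_mul] at hk
    rcases lt_trichotomy (Icore t j) 1 with hc | hc | hc
    · obtain ⟨hp, hs⟩ := h3 t j h hc
      rw [hp, hs]
      nlinarith [mul_nonneg (by linarith : (0:ℝ) ≤ 1 - Icore t j) hσ]
    · obtain ⟨_, _, hcs⟩ := h5 t j h hc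
      rw [hc]; linarith
    · obtain ⟨hp, hs⟩ := h4 t j h hc
      rw [hp, hs]
      nlinarith [mul_nonneg (by linarith : (0:ℝ) ≤ Icore t j - 1) hπ]
  · -- Icand > 1 : forces π = 0, σ = d
    rw [min_eq_left h.le] at hk
    obtain ⟨hp, hs⟩ := h2 t j h
    rw [hp, hs]
    have hπ0 : π t j = 0 := by nlinarith
    rw [hπ0] at hk ⊢
    simp at hk ⊢
    linarith
end

section
/- Exact evaluation after adding one facility, B0 cuts (Proposition 4): let x : I → ℝ be binary, let î ∈ I satisfy x î = 0, and let x̂ be obtained from x by setting coordinate î to 1 and leaving all other coordinates unchanged. With Γ = { j : Icov j x < 1 } (the B0 set generated at x), one has ∑_{j ∈ Γ} Icov j x̂ * d j + ∑_{j ∉ Γ} d j = ∑_{j ∈ J} min(1, Icov j x̂) * d j; that is, the Benders optimality cut generated at x evaluates the covered demand of x̂ exactly. -/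
open scoped Classical

/-- Exact evaluation after adding one facility, B0 cuts
(Proposition 4): let `x : I → ℝ` be binary, `ihat ∈ I` with `x ihat = 0`, and
let `xh = Function.update x ihat 1` (playing the role of `x̂`).  With
`Γ = {j | Icov j x < 1}` (the B0 set generated at `x`), the Benders optimality
cut generated at `x` evaluates the covered demand of `xh` exactly. -/
theorem exact_evaluation_add_one_facility_B0
    (I J : Type*) [Fintype I] [Nonempty I] [DecidableEq I] [Fintype J] [Nonempty J]
    (a : I → J → ℝ) (d : J → ℝ)
    (ha : ∀ i j, a i j = 0 ∨ a i j = 1) (hd : ∀ j, 0 < d j)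
    (x : I → ℝ) (hx : ∀ i, x i = 0 ∨ x i = 1)
    (ihat : I) (hihat : x ihat = 0)
    (xh : I → ℝ) (hxh : xh = Function.update x ihat 1) :
    (∑ j ∈ Finset.univ.filter (fun j => ∑ i, a i j * x i < 1),
        (∑ i, a i j * xh i) * d j)
      + (∑ j ∈ Finset.univ.filter (fun j => ¬ (∑ i, a i j * x i < 1)), d j)
      = ∑ j, min 1 (∑ i, a i j * xh i) * d j := by
  have hcov : ∀ j, (∑ i, a i j * xh i) = (∑ i, a i j * x i) + a ihat j := by
    intro j
    subst hxh
    rw [← Finset.add_sum_erase _ (fun i => a i j * Function.update x ihat 1 i)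
        (Finset.mem_univ ihat),
      ← Finset.add_sum_erase _ (fun i => a i j * x i) (Finset.mem_univ ihat), hihat]
    rw [Finset.sum_congr rfl (fun i hi => by
      rw [Function.update_of_ne (Finset.ne_of_mem_erase hi)])]
    simp [Function.update_self]
    ring
  rw [← Finset.sum_filter_add_sum_filter_not Finset.univ
    (fun j => ∑ i, a i j * x i < 1) (fun j => min 1 (∑ i, a i j * xh i) * d j)]
  congr 1
  · apply Finset.sum_congr rfl
    intro j hj
    have hj' : ∑ i, a i j * x i < 1 := (Finset.mem_filter.mp hj).2
    -- each term is 0 or 1; sum < 1 implies sum = 0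
    have hzero : (∑ i, a i j * x i) = 0 := by
      by_contra h
      have hpos : ∀ i, a i j * x i = 0 ∨ a i j * x i = 1 := by
        intro i
        rcases ha i j with h1 | h1 <;> rcases hx i with h2 | h2 <;> simp [h1, h2]
      have : (1:ℝ) ≤ ∑ i, a i j * x i := by
        obtain ⟨i0, hi0⟩ : ∃ i, a i j * x i ≠ 0 := by
          by_contra hc
          push_neg at hc
          exact h (Finset.sum_eq_zero fun i _ => hc i)
        have h1 : a i0 j * x i0 = 1 := (hpos i0).resolve_left hi0
        calc (1:ℝ) = a i0 j * x i0 := h1.symm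
          _ ≤ ∑ i, a i j * x i := Finset.single_le_sum (f := fun i => a i j * x i)
                (fun i _ => by rcases hpos i with h|h <;> rw [h] <;> norm_num) (Finset.mem_univ i0)
      linarith
    have h1 : (∑ i, a i j * xh i) = a ihat j := by rw [hcov j, hzero]; ring
    rw [h1]
    rcases ha ihat j with h2 | h2 <;> simp [h2]
  · apply Finset.sum_congr rfl
    intro j hj
    have hj' : ¬ (∑ i, a i j * x i < 1) := (Finset.mem_filter.mp hj).2
    push_neg at hj'
    have h0 : 0 ≤ a ihat j := by rcases ha ihat j with h|h <;> simp [h]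
    have : (1:ℝ) ≤ ∑ i, a i j * xh i := by rw [hcov j]; linarith
    rw [min_eq_left this, one_mul]
end

section
/- Exact evaluation after adding one facility, B1 cuts (Proposition 4): let J_s ⊆ J be a set of users such that ∑_{i ∈ I} a i j ≤ 1 for every j ∈ J_s. Let x : I → ℝ be binary, let î ∈ I satisfy x î = 0, and let x̂ be obtained from x by setting coordinate î to 1 and leaving all other coordinates unchanged. With Γ = { j ∉ J_s : Icov j x < 1 } ∪ { j ∈ J_s : Icov j x ≤ 1 } (the B1 set generated at x), one has ∑_{j ∈ Γ} Icov j x̂ * d j + ∑_{j ∉ Γ} d j = ∑_{j ∈ J} min(1, Icov j x̂) * d j; that is, the Benders optimality cut generated at x evaluates the covered demand of x̂ exactly. -/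
open scoped Classical

/-- Exact evaluation after adding one facility, B1 cuts
(Proposition 4): let `Js ⊆ J` be a set of users with `∑ i, a i j ≤ 1` for every
`j ∈ Js`, let `x : I → ℝ` be binary, `ihat ∈ I` with `x ihat = 0`, and let
`xh = Function.update x ihat 1` (playing the role of `x̂`).  With
`Γ = {j ∉ Js | Icov j x < 1} ∪ {j ∈ Js | Icov j x ≤ 1}` (the B1 set generated at
`x`), the Benders optimality cut generated at `x` evaluates the covered demand
of `xh` exactly. -/
theorem exact_evaluation_add_one_facility_B1
    (I J : Type*) [Fintype I] [Nonempty I] [DecidableEq I] [Fintype J] [Nonempty J]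
    (a : I → J → ℝ) (d : J → ℝ)
    (ha : ∀ i j, a i j = 0 ∨ a i j = 1) (hd : ∀ j, 0 < d j)
    (Js : Set J) (hJs : ∀ j ∈ Js, ∑ i, a i j ≤ 1)
    (x : I → ℝ) (hx : ∀ i, x i = 0 ∨ x i = 1)
    (ihat : I) (hihat : x ihat = 0)
    (xh : I → ℝ) (hxh : xh = Function.update x ihat 1)
    (Γ : Set J)
    (hΓ : Γ = { j : J | j ∉ Js ∧ ∑ i, a i j * x i < 1 }
            ∪ { j : J | j ∈ Js ∧ ∑ i, a i j * x i ≤ 1 }) :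
    (∑ j ∈ Finset.univ.filter (fun j => j ∈ Γ), (∑ i, a i j * xh i) * d j)
      + (∑ j ∈ Finset.univ.filter (fun j => j ∉ Γ), d j)
      = ∑ j, min 1 (∑ i, a i j * xh i) * d j := by
  have ha0 : ∀ i j, 0 ≤ a i j := by
    intro i j; rcases ha i j with h | h <;> simp [h]
  have key : ∀ j, ∑ i, a i j * xh i = (∑ i, a i j * x i) + a ihat j := by
    intro j
    have h1 : ∀ i, a i j * xh i = a i j * x i + (if i = ihat then a ihat j else 0) := by
      intro i
      by_cases h : i = ihat
      · subst h; simp [hxh, Function.update_self, hihat]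
      · simp [hxh, Function.update_of_ne h, h]
    simp [h1, Finset.sum_add_distrib]
  -- coverage of x is nonneg, and either 0 or ≥ 1
  have hterm : ∀ i j, a i j * x i = 0 ∨ a i j * x i = 1 := by
    intro i j
    rcases ha i j with h | h
    · left; simp [h]
    · rcases hx i with h' | h' <;> simp [h, h']
  have hnn : ∀ j, (0:ℝ) ≤ ∑ i, a i j * x i := by
    intro j
    exact Finset.sum_nonneg fun i _ => by rcases hterm i j with h | h <;> simp [h]
  have hdich : ∀ j, (∑ i, a i j * x i) < 1 → ∑ i, a i j * x i = 0 := by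
    intro j hlt
    by_contra hne
    have : ∃ i ∈ Finset.univ, a i j * x i ≠ 0 := by
      by_contra hall
      push_neg at hall
      exact hne (Finset.sum_eq_zero fun i _ => hall i (Finset.mem_univ i))
    obtain ⟨i, -, hi⟩ := this
    have hi1 : a i j * x i = 1 := (hterm i j).resolve_left hi
    have hsle : a i j * x i ≤ ∑ i, a i j * x i :=
      Finset.single_le_sum (f := fun i => a i j * x i)
        (fun i _ => by rcases hterm i j with h | h <;> simp [h]) (Finset.mem_univ i)
    rw [hi1] at hsle
    linarith
  rw [← Finset.sum_filter_add_sum_filter_not Finset.univ (fun j => j ∈ Γ)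
    (fun j => min 1 (∑ i, a i j * xh i) * d j)]
  congr 1
  · apply Finset.sum_congr rfl
    intro j hj
    simp only [Finset.mem_filter] at hj
    have hle : ∑ i, a i j * xh i ≤ 1 := by
      rw [key]
      rw [hΓ] at hj
      rcases hj.2 with ⟨hnotJs, hlt⟩ | ⟨hJsmem, hle⟩
      · have h0 := hdich j hlt
        rw [h0]
        rcases ha ihat j with h | h <;> simp [h]
      · have : (∑ i, a i j * x i) + a ihat j ≤ ∑ i, a i j := by
          have h1 : ∀ i, a i j * x i ≤ a i j * 1 := by
            intro i
            rcases hx i with h | h <;> simp [h] <;> nlinarith [ha0 i j]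
          have hsplit : ∑ i, a i j * x i = a ihat j * x ihat + ∑ i ∈ Finset.univ.erase ihat, a i j * x i := by
            rw [← Finset.add_sum_erase _ _ (Finset.mem_univ ihat)]
          have hsplit2 : ∑ i, a i j = a ihat j + ∑ i ∈ Finset.univ.erase ihat, a i j := by
            rw [← Finset.add_sum_erase _ _ (Finset.mem_univ ihat)]
          rw [hsplit, hsplit2, hihat]
          simp only [mul_zero, zero_add]
          have hle2 := Finset.sum_le_sum (fun i (_ : i ∈ Finset.univ.erase ihat) => (h1 i))
          simp only [mul_one] at hle2
          linarith
        linarith [hJs j hJsmem]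
    rw [min_eq_right hle]
  · apply Finset.sum_congr rfl
    intro j hj
    simp only [Finset.mem_filter] at hj
    have hge : 1 ≤ ∑ i, a i j * xh i := by
      rw [key]
      rw [hΓ] at hj
      have hj2 := hj.2
      simp only [Set.mem_union, Set.mem_setOf_eq, not_or, not_and] at hj2
      have h1 : 1 ≤ ∑ i, a i j * x i := by
        by_cases hmem : j ∈ Js
        · have := hj2.2 hmem; linarith [not_le.mp this]
        · have := hj2.1 hmem; linarith [not_lt.mp this]
      linarith [ha0 ihat j]
    rw [min_eq_left hge, one_mul]
end

section
/- Exact solution of the local branching restricted subproblem by cuts (core of Proposition 5): let x̃ : I → ℝ be binary. For binary y : I → ℝ define Γ(y) = { j : Icov j y < 1 } and the cut value Cut_y(x) = ∑_{j ∈ Γ(y)} Icov j x * d j + ∑_{j ∉ Γ(y)} d j, and let Y be the (finite, nonempty) family consisting of x̃ together with every vector obtained from x̃ by flipping exactly one coordinate (a zero-coordinate set to 1, or a one-coordinate set to 0). Let x̂ be binary and obtained from x̃ by one of the following modifications: no change; setting one zero-coordinate to 1; setting two distinct zero-coordinates to 1; setting one one-coordinate to 0; or setting one one-coordinate to 0 and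 one zero-coordinate to 1. Then the covered demand of x̂ equals the minimum of the cut values over the family, i.e. ∑_{j ∈ J} min(1, Icov j x̂) * d j is the least element of { Cut_y(x̂) : y ∈ Y }. -/
open scoped Classical

section Aux
variable {I J : Type*} [Fintype I] [DecidableEq I]

lemma aux_sum_update (a : I → J → ℝ) (x : I → ℝ) (i0 : I) (c : ℝ) (j : J) :
    ∑ i, a i j * Function.update x i0 c i
      = (∑ i, a i j * x i) + a i0 j * (c - x i0) := by
  have h : ∀ i, a i j * Function.update x i0 c i
      = a i j * x i + (if i = i0 then a i0 j * (c - x i0) else 0) := by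
    intro i
    by_cases h : i = i0 <;> simp [Function.update_apply, h] <;> ring
  rw [Finset.sum_congr rfl fun i _ => h i, Finset.sum_add_distrib,
    Finset.sum_ite_eq' Finset.univ i0 (fun _ => a i0 j * (c - x i0))]
  simp

lemma aux_cov_zero (a : I → J → ℝ) (ha : ∀ i j, a i j = 0 ∨ a i j = 1)
    (y : I → ℝ) (hy : ∀ i, y i = 0 ∨ y i = 1) (j : J)
    (h : ∑ i, a i j * y i < 1) : ∑ i, a i j * y i = 0 := by
  have hnn : ∀ k ∈ Finset.univ, (0:ℝ) ≤ a k j * y k := by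
    intro k _
    rcases ha k j with h3|h3 <;> rcases hy k with h4|h4 <;> simp [h3,h4]
  have hterm : ∀ i, a i j * y i = 0 := by
    intro i
    rcases ha i j with h1 | h1 <;> rcases hy i with h2 | h2 <;> simp [h1, h2]
    exfalso
    have hle := Finset.single_le_sum hnn (Finset.mem_univ i)
    rw [h1, h2] at hle
    linarith
  simp [hterm]

lemma aux_bin_update (x : I → ℝ) (hx : ∀ i, x i = 0 ∨ x i = 1) (i0 : I) (c : ℝ)
    (hc : c = 0 ∨ c = 1) : ∀ i, Function.update x i0 c i = 0 ∨ Function.update x i0 c i = 1 := by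
  intro i
  by_cases h : i = i0 <;> simp [Function.update_apply, h, hc, hx i]

end Aux

/-- Exact solution of the local branching restricted subproblem by
cuts (core of Proposition 5): `xt` plays the role of `x̃` and `xh` the role of
`x̂`.  For binary `y`, the cut value of `x` is
`Cut_y(x) = ∑_{j : Icov j y < 1} Icov j x * d j + ∑_{j : Icov j y ≥ 1} d j`.
Let `Y` consist of `xt` together with every vector obtained from `xt` by
flipping exactly one coordinate.  If `xh` is binary and obtained from `xt` by no
change, adding one or two facilities, removing one facility, or swapping one
facility for another, then the covered demand of `xh`,
`∑ j, min 1 (Icov j xh) * d j`, is the least element of the set of cut values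
`{Cut_y(xh) : y ∈ Y}`. -/
theorem restricted_subproblem_exact_by_cuts
    (I J : Type*) [Fintype I] [Nonempty I] [DecidableEq I] [Fintype J] [Nonempty J]
    (a : I → J → ℝ) (d : J → ℝ)
    (ha : ∀ i j, a i j = 0 ∨ a i j = 1) (hd : ∀ j, 0 < d j)
    (xt : I → ℝ) (hxt : ∀ i, xt i = 0 ∨ xt i = 1)
    (xh : I → ℝ) (hxh : ∀ i, xh i = 0 ∨ xh i = 1)
    (hmod :
      xh = xt ∨
      (∃ i, xt i = 0 ∧ xh = Function.update xt i 1) ∨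
      (∃ i i', i ≠ i' ∧ xt i = 0 ∧ xt i' = 0 ∧
        xh = Function.update (Function.update xt i 1) i' 1) ∨
      (∃ i, xt i = 1 ∧ xh = Function.update xt i 0) ∨
      (∃ i i', xt i = 1 ∧ xt i' = 0 ∧
        xh = Function.update (Function.update xt i 0) i' 1)) :
    IsLeast
      { v : ℝ | ∃ y ∈ insert xt
            { y' : I → ℝ | ∃ i, y' = Function.update xt i (1 - xt i) },
          v = (∑ j ∈ Finset.univ.filter (fun j => ∑ i, a i j * y i < 1),
                (∑ i, a i j * xh i) * d j)
            + ∑ j ∈ Finset.univ.filter (fun j => ¬ (∑ i, a i j * y i < 1)), d j }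
      (∑ j, min 1 (∑ i, a i j * xh i) * d j) := by
  have ha0 : ∀ i j, 0 ≤ a i j := fun i j => by rcases ha i j with h|h <;> simp [h]
  have ha1 : ∀ i j, a i j ≤ 1 := fun i j => by rcases ha i j with h|h <;> simp [h]
  -- the main equality lemma
  have main : ∀ y : I → ℝ,
      (∀ j, (∑ i, a i j * y i < 1 → ∑ i, a i j * xh i ≤ 1) ∧
            (¬ ∑ i, a i j * y i < 1 → 1 ≤ ∑ i, a i j * xh i)) →
      (∑ j, min 1 (∑ i, a i j * xh i) * d j)
        = (∑ j ∈ Finset.univ.filter (fun j => ∑ i, a i j * y i < 1),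
                (∑ i, a i j * xh i) * d j)
            + ∑ j ∈ Finset.univ.filter (fun j => ¬ (∑ i, a i j * y i < 1)), d j := by
    intro y hkey
    rw [← Finset.sum_filter_add_sum_filter_not Finset.univ
      (fun j => ∑ i, a i j * y i < 1) (fun j => min 1 (∑ i, a i j * xh i) * d j)]
    congr 1
    · apply Finset.sum_congr rfl
      intro j hj
      rw [min_eq_right ((hkey j).1 (by simpa using hj))]
    · apply Finset.sum_congr rfl
      intro j hj
      rw [min_eq_left ((hkey j).2 (by simpa using hj)), one_mul]
  -- key facts for the "add one facility to y" pattern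
  have hkey_add : ∀ (y : I → ℝ), (∀ i, y i = 0 ∨ y i = 1) → ∀ (i' : I) (j : J),
      (∑ i, a i j * y i < 1 → ∑ i, a i j * Function.update y i' 1 i ≤ 1) ∧
      (¬ ∑ i, a i j * y i < 1 → 1 ≤ ∑ i, a i j * Function.update y i' 1 i) := by
    intro y hy i' j
    rw [aux_sum_update]
    constructor
    · intro h
      rw [aux_cov_zero a ha y hy j h]
      have h1 := ha1 i' j
      have h0 := ha0 i' j
      rcases hy i' with h2|h2 <;> rw [h2] <;> nlinarith
    · intro h
      push_neg at h
      have h0 := ha0 i' j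
      rcases hy i' with h2|h2 <;> rw [h2] <;> nlinarith
  constructor
  · -- membership
    rcases hmod with h | ⟨i, hi, hupd⟩ | ⟨i, i', hne, hi, hi', hupd⟩ | ⟨i, hi, hupd⟩ |
      ⟨i, i', hi, hi', hupd⟩
    · -- no change
      refine ⟨xt, Set.mem_insert _ _, main xt ?_⟩
      intro j
      subst h
      exact ⟨le_of_lt, not_lt.mp⟩
    · -- add one: take y = xh
      refine ⟨xh, Or.inr ⟨i, by rw [hupd, hi]; norm_num⟩, main xh fun j => ⟨le_of_lt, not_lt.mp⟩⟩
    · -- add two: take y = update xt i 1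
      have hybin := aux_bin_update xt hxt i 1 (Or.inr rfl)
      refine ⟨Function.update xt i 1, Or.inr ⟨i, by rw [hi]; norm_num⟩, main _ ?_⟩
      intro j
      have h0 : Function.update xt i 1 i' = 0 := by
        rw [Function.update_apply, if_neg (Ne.symm hne), hi']
      rw [hupd]
      exact hkey_add _ hybin i' j
    · -- remove one: take y = xh
      refine ⟨xh, Or.inr ⟨i, by rw [hupd, hi]; norm_num⟩, main xh fun j => ⟨le_of_lt, not_lt.mp⟩⟩
    · -- swap: take y = update xt i 0
      have hybin := aux_bin_update xt hxt i 0 (Or.inl rfl)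
      refine ⟨Function.update xt i 0, Or.inr ⟨i, by rw [hi]; norm_num⟩, main _ ?_⟩
      intro j
      rw [hupd]
      exact hkey_add _ hybin i' j
  · -- lower bound
    rintro v ⟨y, hy, rfl⟩
    rw [← Finset.sum_filter_add_sum_filter_not Finset.univ
      (fun j => ∑ i, a i j * y i < 1) (fun j => min 1 (∑ i, a i j * xh i) * d j)]
    apply add_le_add
    · apply Finset.sum_le_sum
      intro j _
      exact mul_le_mul_of_nonneg_right (min_le_right _ _) (hd j).le
    · apply Finset.sum_le_sum
      intro j _
      calc min 1 (∑ i, a i j * xh i) * d j ≤ 1 * d j :=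
            mul_le_mul_of_nonneg_right (min_le_left _ _) (hd j).le
        _ = d j := one_mul _
end

section
/- Proposition 4 does not extend to B2-type cuts: there exist nonempty finite sets I, J, coverage parameters a : I → J → ℝ with a i j ∈ {0,1} for all i, j, demands d : J → ℝ with d j > 0 for all j, a binary x : I → ℝ, and î ∈ I with x î = 0, such that letting x̂ be obtained from x by setting coordinate î to 1 and Γ = { j : Icov j x ≤ 1 } (the B2 set generated at x), one has ∑_{j ∈ Γ} Icov j x̂ * d j + ∑_{j ∉ Γ} d j ≠ ∑_{j ∈ J} min(1, Icov j x̂) * d j. -/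
open scoped Classical

/-- Proposition 4 does not extend to B2-type cuts: there exist
nonempty finite sets of facilities and users (represented as `Fin nI` and
`Fin nJ` with `nI, nJ > 0`), 0/1 coverage parameters `a`, positive demands `d`,
a binary candidate `x`, and a facility `ihat` with `x ihat = 0`, such that for
`xh = Function.update x ihat 1` and the B2 set `Γ = {j | Icov j x ≤ 1}`
generated at `x`, the cut left-hand side differs from the covered demand of
`xh`. -/
theorem B2_cut_not_exact_after_adding_facility :
    ∃ (nI nJ : ℕ), 0 < nI ∧ 0 < nJ ∧
    ∃ (a : Fin nI → Fin nJ → ℝ) (d : Fin nJ → ℝ) (x : Fin nI → ℝ)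
      (ihat : Fin nI),
      (∀ i j, a i j = 0 ∨ a i j = 1) ∧
      (∀ j, 0 < d j) ∧
      (∀ i, x i = 0 ∨ x i = 1) ∧
      x ihat = 0 ∧
      (∑ j ∈ Finset.univ.filter (fun j => ∑ i, a i j * x i ≤ 1),
          (∑ i, a i j * (Function.update x ihat 1) i) * d j)
        + (∑ j ∈ Finset.univ.filter (fun j => ¬ (∑ i, a i j * x i ≤ 1)), d j)
        ≠ ∑ j, min 1 (∑ i, a i j * (Function.update x ihat 1) i) * d j := by
  refine ⟨2, 1, by norm_num, by norm_num,
    (fun _ _ => 1), (fun _ => 1), (fun i => if i = 0 then 1 else 0), 1,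
    fun _ _ => Or.inr rfl, fun _ => one_pos, ?_, by norm_num, ?_⟩
  · intro i
    by_cases h : i = 0 <;> simp [h]
  · simp [Fin.sum_univ_two, Fin.sum_univ_one, Function.update, Finset.filter]
end
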